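/- arXiv:1302.6288 — 2 statements merged into one kernel-verified Lean document; each statement's English description precedes it below -/
import Mathlib

section
/- Let y = A x₀ with x₀ supported on T, and let Y be the L×(m−L) Hankel matrix with Y_{pq} = y_{p+q}. If L ≥ |T| and m − L ≥ |T|, then rank Y = |T| and the column span of Y equals the column span of A_T^L, where A_T^L is the restriction of A_T to its first L rows. -/
open Complex

noncomputable def partialFourier (m n : ℕ) : Matrix (Fin m) (Fin n) ℂ :=
  Matrix.of fun j k => Complex.exp (2 * Real.pi * Complex.I * j * k / n)

/-- The `L × (m−L)` Hankel matrix of `y`, with `Y p q = y (p+q)`. -/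
def hankel (m L : ℕ) (y : Fin m → ℂ) : Matrix (Fin L) (Fin (m - L)) ℂ :=
  Matrix.of fun p q => y ⟨p.1 + q.1, by have := p.2; have := q.2; omega⟩

/-!
Since `x₀` vanishes off `T`, `y_j = ∑_{k ∈ T} x₀_k ω_k ^ j` with the distinct nodes
`ω_k = e^{2πik/n}`, so the Hankel matrix factors as `Y = B * (diag x₀|_T * V)` with the
Vandermonde-type matrices `B = (ω_k ^ p)` of size `L × |T|` and `V = (ω_k ^ q)` of size
`|T| × (m - L)`. Distinct nodes and `L, m - L ≥ |T|` give both factors rank `|T|`; since the right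
factor then has full row rank, `Y` has the column space of `B`, which is that of `A_T^L`.
-/

open Matrix Module

namespace Matrix

@[simp]
theorem rectVandermonde_one_apply {R ι : Type*} [CommRing R] {n : ℕ} (v : ι → R) (i : ι)
    (j : Fin n) : rectVandermonde v 1 n i j = v i ^ (j : ℕ) := by
  simp [rectVandermonde_apply]

variable {K ι : Type*} [Field K] [Fintype ι]

theorem linearIndependent_rectVandermonde_one {v : ι → K} (hv : Function.Injective v) {n : ℕ}
    (hn : Fintype.card ι ≤ n) : LinearIndependent K (rectVandermonde v 1 n).row := by
  let e := Fintype.equivFin ι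
  have hsq : LinearIndependent K (vandermonde (v ∘ e.symm)).row := by
    rw [linearIndependent_rows_iff_isUnit, isUnit_iff_isUnit_det, isUnit_iff_ne_zero,
      det_vandermonde_ne_zero_iff]
    exact hv.comp e.symm.injective
  have hcomp : LinearIndependent K
      fun i => LinearMap.funLeft K K (Fin.castLE hn) (rectVandermonde v 1 n (e.symm i)) := by
    convert hsq using 1
    funext i j
    simp [LinearMap.funLeft, row]
  exact (linearIndependent_equiv e.symm).mp (LinearIndependent.of_comp _ hcomp)

theorem rank_rectVandermonde_one {v : ι → K} (hv : Function.Injective v) {n : ℕ}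
    (hn : Fintype.card ι ≤ n) : (rectVandermonde v 1 n).rank = Fintype.card ι :=
  (linearIndependent_rectVandermonde_one hv hn).rank_matrix

variable {l m n : Type*} [Fintype m]

theorem range_mulVecLin_mul_of_rank_eq_card [Fintype n] (B : Matrix l m K) {C : Matrix m n K}
    (hC : C.rank = Fintype.card m) :
    LinearMap.range (B * C).mulVecLin = LinearMap.range B.mulVecLin := by
  rw [mulVecLin_mul, LinearMap.range_comp_of_range_eq_top]
  apply Submodule.eq_top_of_finrank_eq
  rw [← rank, hC, finrank_fintype_fun_eq_card]

theorem rank_mul_of_rank_eq_card [Fintype n] (B : Matrix l m K) {C : Matrix m n K}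
    (hC : C.rank = Fintype.card m) : (B * C).rank = B.rank := by
  rw [rank, rank, range_mulVecLin_mul_of_rank_eq_card B hC]

theorem rank_diagonal_mul_rectVandermonde_one [DecidableEq ι] {c v : ι → K}
    (hc : ∀ i, c i ≠ 0) (hv : Function.Injective v) {n : ℕ} (hn : Fintype.card ι ≤ n) :
    (diagonal c * rectVandermonde v 1 n).rank = Fintype.card ι := by
  have hdiag : IsUnit (diagonal c).det := by
    rw [det_diagonal, isUnit_iff_ne_zero]
    exact Finset.prod_ne_zero_iff.mpr fun i _ => hc i
  rw [rank_mul_eq_right_of_isUnit_det _ _ hdiag, rank_rectVandermonde_one hv hn]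

end Matrix

open Real

noncomputable def fourierNode (n : ℕ) (k : Fin n) : ℂ := exp (2 * π * I / n) ^ (k : ℕ)

theorem fourierNode_injective (n : ℕ) : Function.Injective (fourierNode n) := fun k k' h =>
  Fin.ext <| (isPrimitiveRoot_exp n (Fin.pos k).ne').pow_inj k.2 k'.2 h

theorem partialFourier_apply_eq_fourierNode_pow (m n : ℕ) (j : Fin m) (k : Fin n) :
    partialFourier m n j k = fourierNode n k ^ (j : ℕ) := by
  rw [partialFourier, of_apply, fourierNode, ← pow_mul, ← Complex.exp_nat_mul]
  congr 1
  push_cast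
  ring

theorem partialFourier_mulVec_eq_sum {m n : ℕ} {x : Fin n → ℂ} {T : Finset (Fin n)}
    (hx : ∀ k ∉ T, x k = 0) (j : Fin m) :
    (partialFourier m n *ᵥ x) j = ∑ k : T, x k * fourierNode n k ^ (j : ℕ) := by
  rw [mulVec, dotProduct, Finset.sum_coe_sort T fun k => x k * fourierNode n k ^ (j : ℕ),
    ← Finset.sum_subset (Finset.subset_univ T) fun k _ hk => by rw [hx k hk, mul_zero]]
  simp only [partialFourier_apply_eq_fourierNode_pow, mul_comm]

theorem hankel_eq_mul_of_eq_sum_pow {ι : Type*} [Fintype ι] [DecidableEq ι] {m L : ℕ}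
    {y : Fin m → ℂ} (c z : ι → ℂ) (hy : ∀ j, y j = ∑ i, c i * z i ^ (j : ℕ)) :
    hankel m L y = (rectVandermonde z 1 L)ᵀ * (diagonal c * rectVandermonde z 1 (m - L)) := by
  ext p q
  rw [mul_apply]
  simp only [hankel, of_apply, hy, pow_add, diagonal_mul, transpose_apply,
    rectVandermonde_one_apply]
  exact Finset.sum_congr rfl fun i _ => by ring

theorem hankel_rank_and_range_general (m n L : ℕ) (hLm : L < m)
    (x₀ : Fin n → ℂ) (T : Finset (Fin n)) (hsupp : ∀ k, x₀ k ≠ 0 ↔ k ∈ T)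
    (y : Fin m → ℂ) (hy : y = (partialFourier m n).mulVec x₀)
    (hLT : T.card ≤ L) (hmLT : T.card ≤ m - L) :
    (hankel m L y).rank = T.card ∧
      Submodule.span ℂ (Set.range fun q : Fin (m - L) => fun p : Fin L => hankel m L y p q) =
        Submodule.span ℂ
          ((fun k => fun p : Fin L => partialFourier m n ⟨p.1, lt_trans p.2 hLm⟩ k) '' T) := by
  classical
  set z : T → ℂ := fun k => fourierNode n k
  have hz : Function.Injective z := (fourierNode_injective n).comp Subtype.val_injective
  have hfac : hankel m L y = (rectVandermonde z 1 L)ᵀ *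
      (diagonal (fun k : T => x₀ k) * rectVandermonde z 1 (m - L)) :=
    hankel_eq_mul_of_eq_sum_pow _ _ fun j => by
      rw [hy, partialFourier_mulVec_eq_sum fun k hk => not_not.mp (mt (hsupp k).mp hk)]
  have hC := rank_diagonal_mul_rectVandermonde_one (n := m - L) (fun k : T => (hsupp k).mpr k.2)
    hz (by rwa [Fintype.card_coe])
  constructor
  · rw [hfac, rank_mul_of_rank_eq_card _ hC, rank_transpose,
      rank_rectVandermonde_one hz (by rwa [Fintype.card_coe]), Fintype.card_coe]
  · change Submodule.span ℂ (Set.range (hankel m L y).col) = _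
    rw [← range_mulVecLin, hfac, range_mulVecLin_mul_of_rank_eq_card _ hC, range_mulVecLin,
      Set.image_eq_range]
    congr 2
    funext k p
    simp [z, col, partialFourier_apply_eq_fourierNode_pow]

/-- If `L ≥ |T|` and `m − L ≥ |T|`, then the Hankel matrix `Y` of `y = A x₀`
(with `supp x₀ = T`) has rank `|T|`, and its column span equals the column span
of `A_T^L`, the restriction of `A_T` to its first `L` rows. -/
theorem hankel_rank_and_range (m n L : ℕ) (hmn : m ≤ n) (hL1 : 1 ≤ L) (hLm : L < m)
    (x₀ : Fin n → ℂ) (T : Finset (Fin n)) (hsupp : ∀ k, x₀ k ≠ 0 ↔ k ∈ T)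
    (y : Fin m → ℂ) (hy : y = (partialFourier m n).mulVec x₀)
    (hLT : T.card ≤ L) (hmLT : T.card ≤ m - L) :
    (hankel m L y).rank = T.card ∧
      Submodule.span ℂ (Set.range fun q : Fin (m - L) => fun p : Fin L => hankel m L y p q) =
        Submodule.span ℂ
          ((fun k => fun p : Fin L => partialFourier m n ⟨p.1, lt_trans p.2 hLm⟩ k) '' T) :=
  hankel_rank_and_range_general m n L hLm x₀ T hsupp y hy hLT hmLT
end

section
/- In the noiseless setting, for k ∈ Ω, the index k belongs to the true support T if and only if y does not lie in the span of the columns of A indexed by Ω \ {k}; that is, the angle between y and Ran A_{Ω\k} is nonzero precisely when k ∈ T. -/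
/-!
Full spark extends to linear independence of the columns indexed by `Ω` (pad `Ω` to `m`
indices), and `y` is a combination of these columns with coefficients `x₀`, supported on `Ω`.
By independence this is the only way to write `y` from the `Ω`-columns, so `y` lies in the span
of the columns indexed by `Ω \ {k}` exactly when `x₀ k = 0`, i.e. when `k ∉ T`.
-/

open Complex

section LinearIndepOn

variable {ι R M : Type*} [Ring R] [AddCommGroup M] [Module R M] {v : ι → M} {Ω : Set ι}

theorem LinearIndepOn.linearCombination_mem_span_image_iff (hv : LinearIndepOn R v Ω)
    {l : ι →₀ R} (hl : l ∈ Finsupp.supported R R Ω) {s : Set ι} (hs : s ⊆ Ω) :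
    Finsupp.linearCombination R v l ∈ Submodule.span R (v '' s) ↔
      l ∈ Finsupp.supported R R s := by
  refine ⟨fun h => ?_, fun h => (Finsupp.mem_span_image_iff_linearCombination R).2 ⟨l, h, rfl⟩⟩
  obtain ⟨l', hl's, hl'⟩ := (Finsupp.mem_span_image_iff_linearCombination R).1 h
  rwa [← linearIndepOn_iffₛ.1 hv l' (Finsupp.supported_mono hs hl's) l hl hl']

theorem LinearIndepOn.apply_ne_zero_iff_linearCombination_notMem_span
    (hv : LinearIndepOn R v Ω) {l : ι →₀ R} (hl : l ∈ Finsupp.supported R R Ω) (k : ι) :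
    l k ≠ 0 ↔ Finsupp.linearCombination R v l ∉ Submodule.span R (v '' (Ω \ {k})) := by
  rw [hv.linearCombination_mem_span_image_iff hl Set.sdiff_subset, not_iff_not,
    Finsupp.mem_supported']
  rw [Finsupp.mem_supported'] at hl
  refine ⟨fun hk i hi => ?_, fun h => h k fun hk => hk.2 rfl⟩
  by_cases hik : i = k
  · rwa [hik]
  · exact hl i fun hiΩ => hi ⟨hiΩ, hik⟩

end LinearIndepOn

theorem linearIndepOn_of_forall_injective_fin_linearIndependent {ι R M : Type*} [Ring R]
    [AddCommGroup M] [Module R M] [Fintype ι] {v : ι → M} {m : ℕ} (hm : m ≤ Fintype.card ι)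
    (hv : ∀ f : Fin m → ι, Function.Injective f → LinearIndependent R (fun i => v (f i)))
    {s : Finset ι} (hs : s.card ≤ m) : LinearIndepOn R v s := by
  classical
  obtain ⟨t, hst, -, ht⟩ := Finset.exists_subsuperset_card_eq (Finset.subset_univ s) hs hm
  let e := t.equivFinOfCardEq ht
  have he : Function.Injective (fun i => (e.symm i : ι)) :=
    Subtype.val_injective.comp e.symm.injective
  have ht_indep : LinearIndepOn R v t := (linearIndependent_equiv e.symm).1 (hv _ he)
  exact ht_indep.mono (by exact_mod_cast hst)

theorem Matrix.mulVec_eq_linearCombination_col {m n R : Type*} [Fintype n] [CommSemiring R]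
    (A : Matrix m n R) (x : n → R) : A.mulVec x = Fintype.linearCombination R A.col x := by
  ext j
  simp [Matrix.mulVec, dotProduct, Fintype.linearCombination_apply, mul_comm]

theorem pruning_criterion_noiseless_general (m n : ℕ) (hmn : m ≤ n)
    (hspark : ∀ f : Fin m → Fin n, Function.Injective f →
      LinearIndependent ℂ (fun i : Fin m => fun j : Fin m => partialFourier m n j (f i)))
    (x₀ : Fin n → ℂ) (T Ω : Finset (Fin n)) (hsupp : ∀ k, x₀ k ≠ 0 ↔ k ∈ T)
    (hTΩ : T ⊆ Ω) (hΩ : Ω.card < m)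
    (y : Fin m → ℂ) (hy : y = (partialFourier m n).mulVec x₀) :
    ∀ k ∈ Ω, (k ∈ T ↔
      y ∉ Submodule.span ℂ
        ((fun l => fun j : Fin m => partialFourier m n j l) '' (↑(Ω.erase k)))) := by
  intro k _
  have hindep : LinearIndepOn ℂ (partialFourier m n).col Ω :=
    linearIndepOn_of_forall_injective_fin_linearIndependent (v := (partialFourier m n).col)
      (by simpa using hmn) hspark hΩ.le
  let l := (Finsupp.linearEquivFunOnFinite ℂ ℂ (Fin n)).symm x₀
  have hl : l ∈ Finsupp.supported ℂ ℂ (Ω : Set (Fin n)) :=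
    (Finsupp.mem_supported' ℂ l).2 fun i hi => not_not.1 fun h => hi (hTΩ ((hsupp i).1 h))
  have hyl : y = Finsupp.linearCombination ℂ (partialFourier m n).col l := by
    rw [hy, Finsupp.linearCombination_eq_fintype_linearCombination_apply,
      Matrix.mulVec_eq_linearCombination_col]
  rw [← hsupp, hyl, Finset.coe_erase]
  exact hindep.apply_ne_zero_iff_linearCombination_notMem_span hl k

/-- Noiseless pruning criterion: for `k ∈ Ω`, `k` belongs to the true support `T`
iff `y` does not lie in the span of the columns of `A` indexed by `Ω \ {k}`. -/
theorem pruning_criterion_noiseless (m n : ℕ) (hmn : m ≤ n)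
    (hspark : ∀ f : Fin m → Fin n, Function.Injective f →
      LinearIndependent ℂ (fun i : Fin m => fun j : Fin m => partialFourier m n j (f i)))
    (x₀ : Fin n → ℂ) (T Ω : Finset (Fin n)) (hsupp : ∀ k, x₀ k ≠ 0 ↔ k ∈ T)
    (hTΩ : T ⊆ Ω) (hΩ : Ω.card < m)
    (y : Fin m → ℂ) (hy : y = (partialFourier m n).mulVec x₀) (hy0 : y ≠ 0) :
    ∀ k ∈ Ω, (k ∈ T ↔
      y ∉ Submodule.span ℂ
        ((fun l => fun j : Fin m => partialFourier m n j l) '' (↑(Ω.erase k)))) :=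
  pruning_criterion_noiseless_general m n hmn hspark x₀ T Ω hsupp hTΩ hΩ y hy
end
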